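/- arXiv:2311.17327 — 2 statements merged into one kernel-verified Lean document; each statement's English description precedes it below -/
import Mathlib

section
/- For every i with 1 ≤ i ≤ M, the total topological distance contrastive loss L(w) = (1/M) Σ_{j=1}^{M} ℓ_j(w), viewed as a function of w_i with all other vectors held fixed, is differentiable at w_i, and its gradient equals (1/M) · ( Σ_{j=1}^{i} exp(⟨z, w_i⟩/τ) / Σ_{k=j}^{M} exp(⟨z, w_k⟩/τ) − 1 ) · (z/τ). -/
/-- The per-term topological distance contrastive loss:
`ℓ_j(w) = −log( exp(⟨z, w_j⟩/τ) / Σ_{k=j}^{M} exp(⟨z, w_k⟩/τ) )`. -/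
noncomputable def tdlPerTermLoss {d M : ℕ} (τ : ℝ) (z : EuclideanSpace ℝ (Fin d))
    (w : Fin M → EuclideanSpace ℝ (Fin d)) (j : Fin M) : ℝ :=
  - Real.log (Real.exp ((inner ℝ z (w j) : ℝ) / τ) /
      ∑ k ∈ Finset.Ici j, Real.exp ((inner ℝ z (w k) : ℝ) / τ))

/-- The total topological distance contrastive loss `L(w) = (1/M) Σ_{j=1}^{M} ℓ_j(w)`. -/
noncomputable def tdlTotalLoss {d M : ℕ} (τ : ℝ) (z : EuclideanSpace ℝ (Fin d))
    (w : Fin M → EuclideanSpace ℝ (Fin d)) : ℝ :=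
  (M : ℝ)⁻¹ * ∑ j : Fin M, tdlPerTermLoss τ z w j

/-!
The loss depends on the batch only through the scores `σ_k = ⟨z, w_k⟩/τ`, as
`M⁻¹ Σ_j (log Σ_{k ≥ j} exp σ_k - σ_j)`. The score `σ_i` enters the `j`-th log-sum-exp exactly
when `j ≤ i`, contributing the softmax weight `exp σ_i / Σ_{k ≥ j} exp σ_k`, and enters the
linear part once, with coefficient `-1`. The chain rule through `v ↦ ⟨τ⁻¹ • z, v⟩` then
multiplies this partial derivative by `τ⁻¹ • z`.
-/

open Finset Function Real

theorem hasGradientAt_comp_inner {F : Type*} [NormedAddCommGroup F]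
    [InnerProductSpace ℝ F] [CompleteSpace F] {g : ℝ → ℝ} {g' : ℝ} {y x : F}
    (hg : HasDerivAt g g' (inner ℝ y x)) :
    HasGradientAt (fun v => g (inner ℝ y v)) (g' • y) x := by
  rw [hasGradientAt_iff_hasFDerivAt]
  refine (hg.comp_hasFDerivAt x (innerSL ℝ y).hasFDerivAt).congr_fderiv ?_
  ext v
  simp

theorem hasDerivAt_log_sum_exp_update {ι : Type*} [Fintype ι] [DecidableEq ι]
    (σ : ι → ℝ) (i : ι) {s : Finset ι} (hs : s.Nonempty) :
    HasDerivAt (fun t => log (∑ k ∈ s, exp (update σ i t k)))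
      ((if i ∈ s then exp (σ i) else 0) / ∑ k ∈ s, exp (σ k)) (σ i) := by
  have hcoord (k : ι) := hasDerivAt_pi.1 (hasDerivAt_update σ i (σ i)) k
  have hsum := HasDerivAt.fun_sum (u := s) fun k _ => (hcoord k).exp
  have hpos : ∑ k ∈ s, exp (update σ i (σ i) k) ≠ 0 := (sum_pos (fun k _ => exp_pos _) hs).ne'
  refine (hsum.log hpos).congr_deriv ?_
  simp [Pi.single_apply]

/-- `tdlTotalLoss` in terms of the scores `σ_k = ⟨z, w_k⟩/τ`. -/
noncomputable def rankedContrastiveLoss {ι : Type*} [Fintype ι] [Preorder ι]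
    [LocallyFiniteOrderTop ι] (σ : ι → ℝ) : ℝ :=
  (Fintype.card ι : ℝ)⁻¹ * ∑ j, (log (∑ k ∈ Ici j, exp (σ k)) - σ j)

theorem hasDerivAt_rankedContrastiveLoss_update {ι : Type*} [Fintype ι] [DecidableEq ι]
    [Preorder ι] [LocallyFiniteOrderTop ι] [LocallyFiniteOrderBot ι] (σ : ι → ℝ) (i : ι) :
    HasDerivAt (fun t => rankedContrastiveLoss (update σ i t))
      ((Fintype.card ι : ℝ)⁻¹ *
        (∑ j ∈ Iic i, exp (σ i) / ∑ k ∈ Ici j, exp (σ k) - 1)) (σ i) := by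
  classical
  have hterm (j : ι) := (hasDerivAt_log_sum_exp_update σ i (nonempty_Ici (a := j))).sub
    (hasDerivAt_pi.1 (hasDerivAt_update σ i (σ i)) j)
  refine ((HasDerivAt.fun_sum (u := univ) fun j _ => hterm j).const_mul _).congr_deriv ?_
  rw [sum_sub_distrib, ← filter_ge_eq_Iic, sum_filter]
  simp [Pi.single_apply, ite_div]

theorem tdlTotalLoss_eq_rankedContrastiveLoss {d M : ℕ} (τ : ℝ) (z : EuclideanSpace ℝ (Fin d))
    (w : Fin M → EuclideanSpace ℝ (Fin d)) :
    tdlTotalLoss τ z w = rankedContrastiveLoss fun k => inner ℝ z (w k) / τ := by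
  simp only [tdlTotalLoss, rankedContrastiveLoss, tdlPerTermLoss, Fintype.card_fin]
  congr 1
  refine sum_congr rfl fun j _ => ?_
  rw [log_div (exp_ne_zero _) (sum_pos (fun k _ => exp_pos _) nonempty_Ici).ne', log_exp]
  ring

theorem tdl_total_grad_general {d M : ℕ}
    (τ : ℝ) (z : EuclideanSpace ℝ (Fin d))
    (w : Fin M → EuclideanSpace ℝ (Fin d)) (i : Fin M) :
    DifferentiableAt ℝ (fun v => tdlTotalLoss τ z (Function.update w i v)) (w i) ∧
    gradient (fun v => tdlTotalLoss τ z (Function.update w i v)) (w i) =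
      ((M : ℝ)⁻¹ *
        (∑ j ∈ Finset.Iic i,
            Real.exp ((inner ℝ z (w i) : ℝ) / τ) /
              (∑ k ∈ Finset.Ici j, Real.exp ((inner ℝ z (w k) : ℝ) / τ)) - 1)) •
        (τ⁻¹ • z) := by
  set σ : Fin M → ℝ := fun k => inner ℝ z (w k) / τ
  have hscore (v : EuclideanSpace ℝ (Fin d)) : inner ℝ z v / τ = inner ℝ (τ⁻¹ • z) v := by
    rw [real_inner_smul_left, div_eq_inv_mul]
  have hloss : (fun v => tdlTotalLoss τ z (update w i v)) =
      fun v => rankedContrastiveLoss (update σ i (inner ℝ (τ⁻¹ • z) v)) := by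
    funext v
    rw [tdlTotalLoss_eq_rankedContrastiveLoss, ← hscore]
    congr 1
    ext k
    exact apply_update (fun _ u => inner ℝ z u / τ) w i v k
  have hderiv := hasDerivAt_rankedContrastiveLoss_update σ i
  rw [show σ i = inner ℝ (τ⁻¹ • z) (w i) from hscore (w i)] at hderiv
  have hgrad := hasGradientAt_comp_inner hderiv
  rw [hloss]
  refine ⟨hgrad.differentiableAt, ?_⟩
  simpa [σ, hscore] using hgrad.gradient

/-- For every `i`, the total loss `L`, viewed as a function of `w_i` with all other
vectors held fixed, is differentiable at `w_i`, and its gradient equals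
`(1/M) · ( Σ_{j=1}^{i} exp(⟨z, w_i⟩/τ) / Σ_{k=j}^{M} exp(⟨z, w_k⟩/τ) − 1 ) · (z/τ)`. -/
theorem tdl_total_grad {d M : ℕ} (hd : 1 ≤ d) (hM : 1 ≤ M)
    (τ : ℝ) (hτ : 0 < τ) (z : EuclideanSpace ℝ (Fin d))
    (w : Fin M → EuclideanSpace ℝ (Fin d)) (i : Fin M) :
    DifferentiableAt ℝ (fun v => tdlTotalLoss τ z (Function.update w i v)) (w i) ∧
    gradient (fun v => tdlTotalLoss τ z (Function.update w i v)) (w i) =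
      ((M : ℝ)⁻¹ *
        (∑ j ∈ Finset.Iic i,
            Real.exp ((inner ℝ z (w i) : ℝ) / τ) /
              (∑ k ∈ Finset.Ici j, Real.exp ((inner ℝ z (w k) : ℝ) / τ)) - 1)) •
        (τ⁻¹ • z) :=
  tdl_total_grad_general τ z w i
end

section
/- Suppose M ≥ 2. Then the gradient of the total topological distance contrastive loss L with respect to the topologically farthest sample w_M (all other vectors held fixed) points in the direction of z: there exists a real number c > 0 such that ∇_{w_M} L(w) = c · z. Explicitly, ∇_{w_M} L(w) = (1/M) · ( Σ_{j=1}^{M−1} exp(⟨z, w_M⟩/τ) / Σ_{k=j}^{M} exp(⟨z, w_k⟩/τ) ) · (z/τ), and the scalar factor (1/(Mτ)) · Σ_{j=1}^{M−1} exp(⟨z, w_M⟩/τ) / Σ_{k=j}^{M} exp(⟨z, w_k⟩/τ) is strictly positive. -/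
/-!
For `j < M` the term `ℓ_j = log (∑_{k ≥ j} exp (⟨z, w_k⟩/τ)) - ⟨z, w_j⟩/τ` depends on `w_M`
only through the log-sum-exp, whose gradient in `w_M` is the softmax weight of `w_M` times `z/τ`;
the last term `ℓ_M = -log (e/e)` vanishes identically. Hence the gradient is a sum of positive
softmax weights times `z/τ`.
-/

open Function Real

theorem sum_exp_comp_update_of_mem {ι F : Type*} [DecidableEq ι] {s : Finset ι} {i : ι}
    (hi : i ∈ s) (f : F → ℝ) (u : ι → F) (v : F) :
    ∑ k ∈ s, exp (f (update u i v k)) = exp (f v) + ∑ k ∈ s \ {i}, exp (f (u k)) :=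
  (Finset.sum_congr rfl fun k _ => apply_update (fun _ x => exp (f x)) u i v k).trans
    (Finset.sum_update_of_mem hi _ _)

theorem hasFDerivAt_log_sum_exp_comp_update {ι F : Type*} [NormedAddCommGroup F]
    [NormedSpace ℝ F] [DecidableEq ι] {s : Finset ι} {i : ι} (hi : i ∈ s) {f : F → ℝ}
    {f' : F →L[ℝ] ℝ} {u : ι → F} (hf : HasFDerivAt f f' (u i)) :
    HasFDerivAt (fun v => log (∑ k ∈ s, exp (f (update u i v k))))
      ((exp (f (u i)) / ∑ k ∈ s, exp (f (u k))) • f') (u i) := by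
  have hsum := sum_exp_comp_update_of_mem hi f u
  have hsum_at : ∑ k ∈ s, exp (f (u k)) = exp (f (u i)) + ∑ k ∈ s \ {i}, exp (f (u k)) := by
    simpa only [update_eq_self] using hsum (u i)
  simp only [hsum]
  convert (hf.exp.add_const (∑ k ∈ s \ {i}, exp (f (u k)))).log (by positivity) using 1
  rw [← hsum_at, smul_smul, div_eq_inv_mul]

theorem HasFDerivAt.hasGradientAt_smul {F : Type*} [NormedAddCommGroup F]
    [InnerProductSpace ℝ F] [CompleteSpace F] {f : F → ℝ} {c : ℝ} {a x : F}
    (h : HasFDerivAt f (c • innerSL ℝ a) x) :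
    HasGradientAt f (c • a) x := by
  have hdual : InnerProductSpace.toDual ℝ F (c • a) = c • innerSL ℝ a := by
    ext y
    simp
  rwa [hasGradientAt_iff_hasFDerivAt, hdual]

section Tdl

variable {d M : ℕ} (τ : ℝ) (z : EuclideanSpace ℝ (Fin d))
  (w : Fin M → EuclideanSpace ℝ (Fin d))

theorem tdlPerTermLoss_eq (j : Fin M) :
    tdlPerTermLoss τ z w j =
      log (∑ k ∈ Finset.Ici j, exp (inner ℝ z (w k) / τ)) - inner ℝ z (w j) / τ := by
  have hpos : 0 < ∑ k ∈ Finset.Ici j, exp (inner ℝ z (w k) / τ) :=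
    Finset.sum_pos (fun k _ => exp_pos _) ⟨j, Finset.mem_Ici.2 le_rfl⟩
  rw [tdlPerTermLoss, log_div (exp_ne_zero _) hpos.ne', log_exp, neg_sub]

theorem tdlPerTermLoss_of_isTop {j : Fin M} (hj : IsTop j) : tdlPerTermLoss τ z w j = 0 := by
  have hIci : Finset.Ici j = {j} := by
    ext k
    simpa only [Finset.mem_Ici, Finset.mem_singleton] using
      ⟨fun h => (hj k).antisymm h, fun h => h.ge⟩
  rw [tdlPerTermLoss, hIci, Finset.sum_singleton, div_self (exp_ne_zero _), log_one, neg_zero]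

theorem hasFDerivAt_tdlPerTermLoss_update {i j : Fin M} (hji : j < i) :
    HasFDerivAt (fun v => tdlPerTermLoss τ z (update w i v) j)
      ((exp (inner ℝ z (w i) / τ) / ∑ k ∈ Finset.Ici j, exp (inner ℝ z (w k) / τ)) •
        innerSL ℝ (τ⁻¹ • z)) (w i) := by
  have hscore : HasFDerivAt (fun x => inner ℝ z x / τ) (innerSL ℝ (τ⁻¹ • z)) (w i) := by
    convert (innerSL ℝ (τ⁻¹ • z)).hasFDerivAt using 1
    ext x
    rw [innerSL_apply_apply, real_inner_smul_left, div_eq_inv_mul]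
  simp only [tdlPerTermLoss_eq, update_of_ne hji.ne]
  exact (hasFDerivAt_log_sum_exp_comp_update (Finset.mem_Ici.2 hji.le) hscore).sub_const _

theorem hasGradientAt_tdlTotalLoss_update {i : Fin M} (hi : IsTop i) :
    HasGradientAt (fun v => tdlTotalLoss τ z (update w i v))
      (((M : ℝ)⁻¹ * ∑ j ∈ Finset.Iio i,
        exp (inner ℝ z (w i) / τ) / ∑ k ∈ Finset.Ici j, exp (inner ℝ z (w k) / τ)) •
          (τ⁻¹ • z)) (w i) := by
  have huniv : (Finset.univ : Finset (Fin M)) = (Finset.Iio i).cons i (by simp) := by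
    rw [← Finset.Iic_eq_cons_Iio]
    ext k
    simpa only [Finset.mem_univ, Finset.mem_Iic, true_iff] using hi k
  refine HasFDerivAt.hasGradientAt_smul ?_
  simp only [tdlTotalLoss, huniv, Finset.sum_cons,
    tdlPerTermLoss_of_isTop τ z _ hi, zero_add, Finset.sum_smul, ← smul_smul]
  exact (HasFDerivAt.fun_sum fun j hj =>
    hasFDerivAt_tdlPerTermLoss_update τ z w (Finset.mem_Iio.1 hj)).const_mul _

end Tdl

/-- For `M ≥ 2`, the gradient of the total loss `L` with respect to the topologically
farthest sample `w_M` points in the direction of `z`: there is `c > 0` with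
`∇_{w_M} L(w) = c • z`.  Explicitly,
`∇_{w_M} L(w) = (1/M) · ( Σ_{j=1}^{M−1} exp(⟨z, w_M⟩/τ) / Σ_{k=j}^{M} exp(⟨z, w_k⟩/τ) ) · (z/τ)`,
and the scalar factor
`(1/(Mτ)) · Σ_{j=1}^{M−1} exp(⟨z, w_M⟩/τ) / Σ_{k=j}^{M} exp(⟨z, w_k⟩/τ)` is strictly
positive. -/
theorem tdl_total_grad_farthest {d M : ℕ} (hM : 2 ≤ M)
    (τ : ℝ) (hτ : 0 < τ) (z : EuclideanSpace ℝ (Fin d))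
    (w : Fin M → EuclideanSpace ℝ (Fin d)) :
    (∃ c : ℝ, 0 < c ∧
      gradient (fun v => tdlTotalLoss τ z (Function.update w ⟨M - 1, by omega⟩ v))
          (w ⟨M - 1, by omega⟩) = c • z) ∧
    gradient (fun v => tdlTotalLoss τ z (Function.update w ⟨M - 1, by omega⟩ v))
        (w ⟨M - 1, by omega⟩) =
      ((M : ℝ)⁻¹ *
        (∑ j ∈ Finset.Iio (⟨M - 1, by omega⟩ : Fin M),
            Real.exp ((inner ℝ z (w ⟨M - 1, by omega⟩) : ℝ) / τ) /
              (∑ k ∈ Finset.Ici j, Real.exp ((inner ℝ z (w k) : ℝ) / τ)))) • (τ⁻¹ • z) ∧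
    0 < (1 / ((M : ℝ) * τ)) *
        (∑ j ∈ Finset.Iio (⟨M - 1, by omega⟩ : Fin M),
            Real.exp ((inner ℝ z (w ⟨M - 1, by omega⟩) : ℝ) / τ) /
              (∑ k ∈ Finset.Ici j, Real.exp ((inner ℝ z (w k) : ℝ) / τ))) := by
  set m : Fin M := ⟨M - 1, by omega⟩
  have hm : IsTop m := fun k => Fin.le_def.2 (by simp only [m]; omega)
  have hgrad := (hasGradientAt_tdlTotalLoss_update τ z w hm).gradient
  set S := ∑ j ∈ Finset.Iio m,
    exp (inner ℝ z (w m) / τ) / ∑ k ∈ Finset.Ici j, exp (inner ℝ z (w k) / τ)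
  have hMpos : (0 : ℝ) < M := by exact_mod_cast (by omega : 0 < M)
  have hS : 0 < S := by
    refine Finset.sum_pos (fun j _ => div_pos (exp_pos _) ?_) ?_
    · exact Finset.sum_pos (fun _ _ => exp_pos _) ⟨j, Finset.mem_Ici.2 le_rfl⟩
    · exact ⟨⟨0, by omega⟩, Finset.mem_Iio.2 (Fin.lt_def.2 (by simp only [m]; omega))⟩
  refine ⟨⟨(M : ℝ)⁻¹ * S * τ⁻¹, ?_, by rw [hgrad, smul_smul]⟩, hgrad, ?_⟩
  · exact mul_pos (mul_pos (inv_pos.2 hMpos) hS) (inv_pos.2 hτ)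
  · exact mul_pos (one_div_pos.2 (mul_pos hMpos hτ)) hS
end
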